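/- arXiv:1604.08580 — 3 statements merged into one kernel-verified Lean document; each statement's English description precedes it below -/
import Mathlib

section
/- For any formal power series f over a field of characteristic zero with f(0) = 0 and nonzero linear coefficient, f has a compositional inverse g, and for every k ≥ 1 the coefficient of t^k in g equals (1/k) times the coefficient of u^(k-1) in (u/f(u))^k. -/
open PowerSeries Finset

/-- Composition (substitution) of formal power series; correct when the
series being substituted has zero constant term. -/
noncomputable def psComp {K : Type*} [Field K] (f g : PowerSeries K) : PowerSeries K :=
  PowerSeries.mk fun n => ∑ k ∈ Finset.range (n + 1), (coeff k f) * (coeff n (g ^ k))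

/-!
The compositional inverse is Mathlib's `PowerSeries.substInvOfIsUnit`, and `psComp` agrees with
`PowerSeries.subst`. For the coefficients put `h = u / f(u)`, so that `f * h = X`. Differentiating
`g(f) = X` gives `g'(f) f' = 1`; multiply by `h^(n+1)` and read off the coefficient of `X^n`.
Expanding `g'(f) = ∑ g'ₘ fᵐ` and using `fᵐ hᵐ = Xᵐ`, each term becomes a "residue"
`[X^j] (f' h^(j+1))` with `j = n - m`, which is `1` for `j = 0` and `0` otherwise: from
`f' h = 1 - f h'` one gets `f' h^(j+1) = h^j - X h^(j-1) h'`, and `h^(j-1) h'` is the derivative of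
`h^j / j`. Only `m = n` survives, so `[X^n] h^(n+1) = (n+1) gₙ₊₁`.
-/

namespace PowerSeries

section CommRing

variable {R : Type*} [CommRing R] {f : R⟦X⟧}

theorem coeff_pow_mul_eq_zero_of_lt (hf : constantCoeff f = 0) (Q : R⟦X⟧) {m n : ℕ}
    (h : n < m) : coeff n (f ^ m * Q) = 0 :=
  X_pow_dvd_iff.mp (dvd_mul_of_dvd_left (pow_dvd_pow_of_dvd (X_dvd_iff.mpr hf) m) Q) n h

theorem coeff_subst_eq_sum_range (hf : constantCoeff f = 0) (P : R⟦X⟧) {n N : ℕ} (hN : n < N) :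
    coeff n (P.subst f) = ∑ m ∈ range N, coeff m P * coeff n (f ^ m) := by
  rw [coeff_subst' (HasSubst.of_constantCoeff_zero' hf)]
  refine finsum_eq_sum_of_support_subset _ fun m hm => ?_
  by_contra hmN
  have hzero : coeff n (f ^ m) = 0 := by
    simpa using coeff_pow_mul_eq_zero_of_lt hf 1 (hN.trans_le (by simpa using hmN))
  exact hm (by simp [hzero])

theorem coeff_subst_mul (hf : constantCoeff f = 0) (P Q : R⟦X⟧) (n : ℕ) :
    coeff n (P.subst f * Q) = ∑ m ∈ range (n + 1), coeff m P * coeff n (f ^ m * Q) := by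
  calc coeff n (P.subst f * Q)
      = ∑ p ∈ antidiagonal n, ∑ m ∈ range (n + 1),
          coeff m P * (coeff p.1 (f ^ m) * coeff p.2 Q) := by
        rw [coeff_mul]
        refine sum_congr rfl fun p hp => ?_
        rw [coeff_subst_eq_sum_range hf P (Nat.antidiagonal.fst_lt hp), sum_mul]
        simp_rw [mul_assoc]
    _ = ∑ m ∈ range (n + 1), coeff m P * coeff n (f ^ m * Q) := by
        simp_rw [sum_comm (s := antidiagonal n), coeff_mul, mul_sum]

end CommRing

theorem psComp_eq_subst {K : Type*} [Field K] {f : K⟦X⟧} (hf : constantCoeff f = 0)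
    (P : K⟦X⟧) : psComp P f = P.subst f := by
  ext n
  rw [psComp, coeff_mk, coeff_subst_eq_sum_range hf P n.lt_succ_self]

section Residue

variable {R : Type*} [CommRing R] [IsAddTorsionFree R] {f h : R⟦X⟧}

theorem coeff_derivative_mul_pow_succ (hf : constantCoeff f = 0) (hfh : f * h = X) (j : ℕ) :
    coeff j (d⁄dX R f * h ^ (j + 1)) = if j = 0 then 1 else 0 := by
  have hleib : h * d⁄dX R f = 1 - f * d⁄dX R h := by
    have := congrArg (d⁄dX R) hfh
    rw [Derivation.leibniz, smul_eq_mul, smul_eq_mul, derivative_X] at this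
    linear_combination this
  rcases j with _ | j
  · rw [pow_one, mul_comm, hleib, map_sub, coeff_zero_eq_constantCoeff_apply (f * _), map_mul,
      hf, zero_mul]
    simp
  · have hpow : (j + 1) • coeff j (h ^ j * d⁄dX R h) = (j + 1) • coeff (j + 1) (h ^ (j + 1)) := by
      have := coeff_derivative (h ^ (j + 1)) j
      rw [Derivation.leibniz_pow, Nat.add_sub_cancel, map_nsmul, smul_eq_mul] at this
      rw [this, nsmul_eq_mul, mul_comm]
      push_cast
      ring
    calc coeff (j + 1) (d⁄dX R f * h ^ (j + 2))
        = coeff (j + 1) (h ^ (j + 1) - X * (h ^ j * d⁄dX R h)) := by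
          rw [← hfh]
          congr 1
          linear_combination h ^ (j + 1) * hleib
      _ = 0 := by
          rw [map_sub, coeff_succ_X_mul, nsmul_right_injective (Nat.succ_ne_zero j) hpow, sub_self]
      _ = if j + 1 = 0 then 1 else 0 := by simp

theorem coeff_pow_mul_derivative_mul_pow_succ (hf : constantCoeff f = 0) (hfh : f * h = X)
    {m n : ℕ} (hmn : m ≤ n) :
    coeff n (f ^ m * (d⁄dX R f * h ^ (n + 1))) = if m = n then 1 else 0 := by
  obtain ⟨j, rfl⟩ := Nat.exists_eq_add_of_le hmn
  have hsplit : f ^ m * (d⁄dX R f * h ^ (m + j + 1)) = X ^ m * (d⁄dX R f * h ^ (j + 1)) := by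
    rw [← hfh]; ring
  rw [hsplit, add_comm m j, coeff_X_pow_mul, coeff_derivative_mul_pow_succ hf hfh]
  simp

theorem coeff_pow_succ_of_subst_eq_X (hf : constantCoeff f = 0) (hfh : f * h = X) {g : R⟦X⟧}
    (hgf : g.subst f = X) (n : ℕ) :
    coeff n (h ^ (n + 1)) = coeff (n + 1) g * (n + 1) := by
  have hchain : (d⁄dX R g).subst f * d⁄dX R f = 1 := by
    rw [← derivative_subst (HasSubst.of_constantCoeff_zero' hf), hgf, derivative_X]
  calc coeff n (h ^ (n + 1))
      = coeff n ((d⁄dX R g).subst f * (d⁄dX R f * h ^ (n + 1))) := by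
        rw [← mul_assoc, hchain, one_mul]
    _ = ∑ m ∈ range (n + 1), coeff m (d⁄dX R g) * coeff n (f ^ m * (d⁄dX R f * h ^ (n + 1))) :=
        coeff_subst_mul hf _ _ n
    _ = coeff n (d⁄dX R g) := by
        rw [sum_eq_single_of_mem n (self_mem_range_succ n) fun m hm hmn => by
          rw [coeff_pow_mul_derivative_mul_pow_succ hf hfh (mem_range_succ_iff.mp hm), if_neg hmn,
            mul_zero]]
        rw [coeff_pow_mul_derivative_mul_pow_succ hf hfh le_rfl, if_pos rfl, mul_one]
    _ = coeff (n + 1) g * (n + 1) := coeff_derivative g n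

end Residue

theorem mul_inv_mk_coeff_succ {K : Type*} [Field K] {f : K⟦X⟧} (hf : constantCoeff f = 0)
    (h1 : coeff 1 f ≠ 0) : f * (mk fun i => coeff (i + 1) f)⁻¹ = X := by
  set F := mk fun i => coeff (i + 1) f
  have hF : constantCoeff F ≠ 0 := by simpa [F] using h1
  have hsplit : f = X * F := by simpa [hf] using eq_X_mul_shift_add_const f
  rw [hsplit, mul_assoc, PowerSeries.mul_inv_cancel F hF, mul_one]

end PowerSeries

/-- Lagrange inversion: a power series `f` with `f(0) = 0` and nonzero linear
coefficient has a compositional inverse `g`, whose `k`-th coefficient equals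
`(1/k)` times the `(k-1)`-st coefficient of `(u / f(u))^k`, where `u / f(u)` is
the inverse of the unit power series `f(u)/u`. -/
theorem lagrange_inversion {K : Type*} [Field K] [CharZero K]
    (f : PowerSeries K) (h0 : coeff 0 f = 0) (h1 : coeff 1 f ≠ 0) :
    ∃ g : PowerSeries K, coeff 0 g = 0 ∧ psComp f g = PowerSeries.X ∧
      psComp g f = PowerSeries.X ∧
      ∀ k : ℕ, 1 ≤ k →
        coeff k g =
          (k : K)⁻¹ * coeff (k - 1) ((PowerSeries.mk fun i => coeff (i + 1) f)⁻¹ ^ k) := by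
  have hf : constantCoeff f = 0 := by rwa [← coeff_zero_eq_constantCoeff_apply]
  have hunit : IsUnit (coeff 1 f) := h1.isUnit
  have hg : constantCoeff (f.substInvOfIsUnit hunit) = 0 := constantCoeff_substInvOfIsUnit f hunit
  have hgf := subst_substInvOfIsUnit_left f hf hunit
  refine ⟨f.substInvOfIsUnit hunit, by rwa [coeff_zero_eq_constantCoeff_apply],
    by rw [psComp_eq_subst hg, subst_substInvOfIsUnit_right f hf hunit],
    by rw [psComp_eq_subst hf, hgf], ?_⟩
  rintro (_ | n) hk
  · omega
  rw [Nat.add_sub_cancel, coeff_pow_succ_of_subst_eq_X hf (mul_inv_mk_coeff_succ hf h1) hgf n,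
    Nat.cast_succ, mul_comm, mul_inv_cancel_right₀ (Nat.cast_add_one_ne_zero n)]
end

section
/- Let (s₀, s₁, s₂) be sequences of real numbers given by polynomials of the same degree d with leading coefficients α₀, α₁, α₂ where α₀ ≠ 0, and suppose the characteristic polynomial α₀t² + α₁t + α₂ has two real roots of distinct absolute values. Suppose a sequence (x_n) satisfies s₀(n)x_n + s₁(n)x_{n-1} + s₂(n)x_{n-2} = 0 for all large n, x_n ≠ 0 for all large n, and the limit L = lim x_{n+1}/x_n exists. Then L is a root of the characteristic polynomial α₀t² + α₁t + α₂. -/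
/-!
Dividing the recurrence at `n + 2` by `(n + 2)^d x_n` gives
`a_n (x_{n+2}/x_n) + b_n (x_{n+1}/x_n) + c_n = 0` with coefficients `a_n, b_n, c_n → α₀, α₁, α₂`;
since `x_{n+2}/x_n → L²`, the left side tends to `α₀ L² + α₁ L + α₂`, which therefore vanishes.
-/

open Filter Polynomial Topology

theorem Polynomial.tendsto_eval_natCast_div_pow {P : ℝ[X]} {d : ℕ} (hP : P.degree = d) :
    Tendsto (fun n : ℕ => P.eval (n : ℝ) / (n : ℝ) ^ d) atTop (𝓝 (P.coeff d)) := by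
  have hdeg : P.degree = (X ^ d : ℝ[X]).degree := by rw [degree_X_pow, hP]
  have hlim := (div_tendsto_atTop_leadingCoeff_div_of_degree_eq _ _ hdeg).comp
    tendsto_natCast_atTop_atTop
  rw [leadingCoeff_X_pow, div_one, leadingCoeff, natDegree_eq_of_degree_eq_some hP] at hlim
  simpa only [eval_X_pow, Function.comp_def] using hlim

theorem tendsto_add_two_div_of_tendsto_succ_div {x : ℕ → ℝ} {L : ℝ} (hx : ∀ᶠ n in atTop, x n ≠ 0)
    (hL : Tendsto (fun n => x (n + 1) / x n) atTop (𝓝 L)) :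
    Tendsto (fun n => x (n + 2) / x n) atTop (𝓝 (L ^ 2)) := by
  have hL' := hL.comp (tendsto_add_atTop_nat 1)
  refine (sq L ▸ hL'.mul hL).congr' ?_
  filter_upwards [(tendsto_add_atTop_nat 1).eventually hx] with n hn
  simp only [Function.comp_apply]
  field_simp

theorem quadratic_eq_zero_of_tendsto_ratio_of_recurrence {a b c x : ℕ → ℝ} {α₀ α₁ α₂ L : ℝ}
    (ha : Tendsto a atTop (𝓝 α₀)) (hb : Tendsto b atTop (𝓝 α₁)) (hc : Tendsto c atTop (𝓝 α₂))
    (hrec : ∀ᶠ n in atTop, a n * x (n + 2) + b n * x (n + 1) + c n * x n = 0)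
    (hx : ∀ᶠ n in atTop, x n ≠ 0) (hL : Tendsto (fun n => x (n + 1) / x n) atTop (𝓝 L)) :
    α₀ * L ^ 2 + α₁ * L + α₂ = 0 := by
  have hlim := ((ha.mul (tendsto_add_two_div_of_tendsto_succ_div hx hL)).add (hb.mul hL)).add hc
  refine tendsto_nhds_unique hlim (tendsto_const_nhds.congr' ?_)
  filter_upwards [hrec, hx] with n hn hxn
  field_simp
  linear_combination -hn

theorem poincare_limit_is_root_general (d : ℕ) (s₀ s₁ s₂ : Polynomial ℝ)
    (hd₀ : s₀.degree = d) (hd₁ : s₁.degree = d) (hd₂ : s₂.degree = d)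
    (α₀ α₁ α₂ : ℝ)
    (hα₀ : α₀ = s₀.coeff d) (hα₁ : α₁ = s₁.coeff d) (hα₂ : α₂ = s₂.coeff d)
    (x : ℕ → ℝ) (N : ℕ)
    (hrec : ∀ n ≥ N, s₀.eval (n : ℝ) * x n + s₁.eval (n : ℝ) * x (n - 1) +
      s₂.eval (n : ℝ) * x (n - 2) = 0)
    (hx : ∀ n ≥ N, x n ≠ 0)
    (L : ℝ) (hL : Tendsto (fun n => x (n + 1) / x n) atTop (nhds L)) :
    α₀ * L ^ 2 + α₁ * L + α₂ = 0 := by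
  let normalized (s : ℝ[X]) (n : ℕ) : ℝ := s.eval ((n + 2 : ℕ) : ℝ) / ((n + 2 : ℕ) : ℝ) ^ d
  have hnormalized {s : ℝ[X]} (hs : s.degree = d) :
      Tendsto (normalized s) atTop (𝓝 (s.coeff d)) :=
    (tendsto_eval_natCast_div_pow hs).comp (tendsto_add_atTop_nat 2)
  subst hα₀ hα₁ hα₂
  refine quadratic_eq_zero_of_tendsto_ratio_of_recurrence
    (hnormalized hd₀) (hnormalized hd₁) (hnormalized hd₂) ?_ (eventually_atTop.2 ⟨N, hx⟩) hL
  filter_upwards [eventually_ge_atTop N] with n hn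
  have hpow : ((n + 2 : ℕ) : ℝ) ^ d ≠ 0 := pow_ne_zero _ (by positivity)
  have hrec_n := hrec (n + 2) (by omega)
  simp only [Nat.add_sub_cancel, show n + 2 - 1 = n + 1 by omega] at hrec_n
  simp only [normalized]
  field_simp
  linear_combination hrec_n

/-- Conclusion-identification part of Poincaré's theorem for order-2 linear
difference equations with polynomial coefficients: if `x_{n+1}/x_n → L`, then
`L` is a root of the characteristic polynomial `α₀t² + α₁t + α₂`. -/
theorem poincare_limit_is_root (d : ℕ) (s₀ s₁ s₂ : Polynomial ℝ)
    (hd₀ : s₀.degree = d) (hd₁ : s₁.degree = d) (hd₂ : s₂.degree = d)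
    (α₀ α₁ α₂ : ℝ)
    (hα₀ : α₀ = s₀.coeff d) (hα₁ : α₁ = s₁.coeff d) (hα₂ : α₂ = s₂.coeff d)
    (hα₀ne : α₀ ≠ 0)
    (hroots : ∃ r₁ r₂ : ℝ, |r₁| ≠ |r₂| ∧
      α₀ * r₁ ^ 2 + α₁ * r₁ + α₂ = 0 ∧ α₀ * r₂ ^ 2 + α₁ * r₂ + α₂ = 0)
    (x : ℕ → ℝ) (N : ℕ)
    (hrec : ∀ n ≥ N, s₀.eval (n : ℝ) * x n + s₁.eval (n : ℝ) * x (n - 1) +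
      s₂.eval (n : ℝ) * x (n - 2) = 0)
    (hx : ∀ n ≥ N, x n ≠ 0)
    (L : ℝ) (hL : Tendsto (fun n => x (n + 1) / x n) atTop (nhds L)) :
    α₀ * L ^ 2 + α₁ * L + α₂ = 0 :=
  poincare_limit_is_root_general d s₀ s₁ s₂ hd₀ hd₁ hd₂ α₀ α₁ α₂ hα₀ hα₁ hα₂ x N hrec hx L hL
end

section
/- In the free (nonsymmetric) operad context for n = 2: let μ be a binary operation and define the relation r = μ∘₁μ + μ∘₂μ. In the quotient of the free operad on μ by the ideal generated by r, the element μ^(3) := μ∘₂(μ∘₂μ) (the right comb with three vertices) is zero; equivalently, μ∘₂(μ∘₂μ) lies in the operadic ideal generated by μ∘₁μ + μ∘₂μ. Concretely in terms of a bilinear map m on a vector space V over a field of characteristic zero satisfying m(m(x,y),z) + m(x,m(y,z)) = 0 for all x,y,z: every 4-fold product m(x, m(y, m(z, w))) vanishes. -/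
/-- In a mock associative algebra (a `ptildeAss²₀`-algebra) over a field of
characteristic zero, i.e. a vector space with a bilinear map `m` satisfying
`m(m(x,y),z) = -m(x,m(y,z))`, every fourfold product
`m(x, m(y, m(z, w)))` vanishes. -/
theorem mock_associative_four_fold_vanishes
    {K : Type*} [Field K] [CharZero K] {V : Type*} [AddCommGroup V] [Module K V]
    (m : V →ₗ[K] V →ₗ[K] V)
    (h : ∀ x y z : V, m (m x y) z = - m x (m y z)) :
    ∀ x y z w : V, m x (m y (m z w)) = 0 := by
  intro x y z w
  have h2 : ∀ x y z : V, m x (m y z) = - m (m x y) z := by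
    intro a b c; rw [h]; rw [neg_neg]
  have key : m x (m y (m z w)) = - m x (m y (m z w)) := by
    calc m x (m y (m z w))
        = - m (m x y) (m z w) := h2 x y (m z w)
      _ = - - m (m (m x y) z) w := by rw [h2 (m x y) z w]
      _ = m (m (m x y) z) w := neg_neg _
      _ = m (- m x (m y z)) w := by rw [h x y z]
      _ = - m (m x (m y z)) w := by simp
      _ = - - m x (m (m y z) w) := by rw [h2 x (m y z) w, neg_neg]
      _ = m x (m (m y z) w) := neg_neg _
      _ = m x (- m y (m z w)) := by rw [h2 y z w, neg_neg]
      _ = - m x (m y (m z w)) := by simp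
  have : (2 : K) • m x (m y (m z w)) = 0 := by
    rw [two_smul]; nth_rewrite 2 [key]; simp
  have h2ne : (2 : K) ≠ 0 := two_ne_zero
  exact (smul_eq_zero.mp this).resolve_left h2ne |>.symm ▸ (smul_eq_zero.mp this).resolve_left h2ne
end
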